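/- Existence of absorbing regions given a strong invariant: let (A₁,B₁),…,(A_k,B_k) be a Streett acceptance condition of measurable subsets of S, and let I ⊆ S be a measurable region such that for every s ∈ S, P_{δ_s}((I^ω)ᶜ ∪ ⋂_{i=1}^k (Fin(A_i) ∪ Inf(B_i))) = 1. Then there exist measurable regions J₁,…,J_k with J_i ⊆ I \ A_i for each i, such that for every i = 1,…,k: (1) sup_{s ∈ J_i} P_{δ_s}(σ_{A_i} < ∞) < 1, and (2) for every s ∈ I, P_{δ_s}(σ_{B_i ∪ J_i ∪ Iᶜ} < ∞) = 1. -/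

import Mathlib

open MeasureTheory ProbabilityTheory Filter Set ENNReal

/-- The one-step shift on trajectories: `shift ω n = ω (n+1)`. -/
def shift {S : Type*} (ω : ℕ → S) : ℕ → S := fun n => ω (n + 1)

/-- `Fin A`: the event of visiting `A` only finitely many times. -/
def finVisits {S : Type*} (A : Set S) : Set (ℕ → S) :=
  {ω | ∃ n, ∀ m, n ≤ m → ω m ∉ A}

/-- `Inf B`: the event of visiting `B` infinitely many times. -/
def infVisits {S : Type*} (B : Set S) : Set (ℕ → S) :=
  {ω | ∀ n, ∃ m, n ≤ m ∧ ω m ∈ B}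

/-- `{σ_A < ∞}`: the event that the first return time to `A` is finite,
where `σ_A = 1 + τ_A ∘ shift`; equivalently `∃ n, ω (n+1) ∈ A`. -/
def retEvent {S : Type*} (A : Set S) : Set (ℕ → S) := {ω | ∃ n, ω (n + 1) ∈ A}

/-- `I^ω`: the event of remaining in `I` forever. -/
def invEvent {S : Type*} (I : Set S) : Set (ℕ → S) := {ω | ∀ n, ω n ∈ I}

/-- Prepend a state to a trajectory. -/
def consTraj {S : Type*} (s : S) (ω : ℕ → S) : ℕ → S
  | 0 => s
  | n + 1 => ω n

/-- `T` is the Ionescu–Tulcea trajectory kernel of the time-homogeneous Markov chain with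
transition kernel `P`: `T s` is the law on `S^ℕ` (with the product σ-algebra) of the
coordinate Markov chain with kernel `P` started at `s`.  It is uniquely characterised
(by the Ionescu–Tulcea theorem) by the one-step Markov recursion below: the trajectory
from `s` is `s` followed by a trajectory started from a `P s`-distributed state.
The trajectory measure `P_ξ` with initial distribution `ξ` is then `ξ.bind (fun s => T s)`,
and `P_{δ_s} = T s`. -/
def IsTrajKernel {S : Type*} [MeasurableSpace S] (P : Kernel S S)
    (T : Kernel S (ℕ → S)) : Prop :=
  ∀ s : S, (T s : Measure (ℕ → S)) =
    ((P s : Measure S).bind (fun u => (T u : Measure (ℕ → S)))).map (consTraj s)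

section Aux

open Topology

variable {S : Type*} [MeasurableSpace S]

@[simp] lemma consTraj_zero (s : S) (ω : ℕ → S) : consTraj s ω 0 = s := rfl
@[simp] lemma consTraj_succ (s : S) (ω : ℕ → S) (n : ℕ) : consTraj s ω (n + 1) = ω n := rfl

lemma measurable_consTraj (s : S) : Measurable (consTraj s : (ℕ → S) → ℕ → S) := by
  apply measurable_pi_lambda
  intro n
  match n with
  | 0 => exact measurable_const
  | (m + 1) => exact measurable_pi_apply m

lemma measurableSet_imp {p : Prop} {A : Set S} (hA : MeasurableSet A) (m : ℕ) :
    MeasurableSet {ω : ℕ → S | p → ω m ∈ A} := by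
  by_cases h : p
  · simp only [h, true_implies]; exact measurable_pi_apply m hA
  · simp only [h, false_implies, setOf_true]; exact MeasurableSet.univ

lemma measurableSet_retEvent {A : Set S} (hA : MeasurableSet A) :
    MeasurableSet (retEvent A) := by
  rw [retEvent, setOf_exists]
  exact MeasurableSet.iUnion fun n => measurable_pi_apply (n + 1) hA

lemma measurableSet_invEvent {I : Set S} (hI : MeasurableSet I) :
    MeasurableSet (invEvent I) := by
  rw [invEvent, setOf_forall]
  exact MeasurableSet.iInter fun n => measurable_pi_apply n hI

lemma measurableSet_finVisits {A : Set S} (hA : MeasurableSet A) :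
    MeasurableSet (finVisits A) := by
  rw [finVisits, setOf_exists]
  refine MeasurableSet.iUnion fun n => ?_
  rw [setOf_forall]
  exact MeasurableSet.iInter fun m => measurableSet_imp hA.compl m

lemma measurableSet_infVisits {B : Set S} (hB : MeasurableSet B) :
    MeasurableSet (infVisits B) := by
  rw [infVisits, setOf_forall]
  refine MeasurableSet.iInter fun n => ?_
  rw [setOf_exists]
  refine MeasurableSet.iUnion fun m => ?_
  by_cases h : n ≤ m
  · simp only [h, true_and]; exact measurable_pi_apply m hB
  · simp only [h, false_and, setOf_false]; exact MeasurableSet.empty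

/-- The event of staying in `G` at times `1, …, n`. -/
def stayE (G : Set S) (n : ℕ) : Set (ℕ → S) := {ω | ∀ m, m < n → ω (m + 1) ∈ G}

/-- The event of staying in `G` at all positive times. -/
def foreverE (G : Set S) : Set (ℕ → S) := {ω | ∀ m, ω (m + 1) ∈ G}

/-- The event of avoiding `A` at all times `> n`. -/
def noHitE (A : Set S) (n : ℕ) : Set (ℕ → S) := {ω | ∀ m, n ≤ m → ω (m + 1) ∉ A}

/-- The event of staying in `G` at all times `> n`. -/
def tailE (G : Set S) (n : ℕ) : Set (ℕ → S) := {ω | ∀ m, n ≤ m → ω (m + 1) ∈ G}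

/-- The event that the initial state lies in `G`. -/
def zeroE (G : Set S) : Set (ℕ → S) := {ω | ω 0 ∈ G}

lemma measurableSet_stayE {G : Set S} (hG : MeasurableSet G) (n : ℕ) :
    MeasurableSet (stayE G n) := by
  rw [stayE, setOf_forall]
  exact MeasurableSet.iInter fun m => measurableSet_imp hG (m + 1)

lemma measurableSet_foreverE {G : Set S} (hG : MeasurableSet G) :
    MeasurableSet (foreverE G) := by
  rw [foreverE, setOf_forall]
  exact MeasurableSet.iInter fun m => measurable_pi_apply (m + 1) hG

lemma measurableSet_noHitE {A : Set S} (hA : MeasurableSet A) (n : ℕ) :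
    MeasurableSet (noHitE A n) := by
  rw [noHitE, setOf_forall]
  exact MeasurableSet.iInter fun m => measurableSet_imp hA.compl (m + 1)

lemma measurableSet_tailE {G : Set S} (hG : MeasurableSet G) (n : ℕ) :
    MeasurableSet (tailE G n) := by
  rw [tailE, setOf_forall]
  exact MeasurableSet.iInter fun m => measurableSet_imp hG (m + 1)

lemma measurableSet_zeroE {G : Set S} (hG : MeasurableSet G) :
    MeasurableSet (zeroE G) := measurable_pi_apply 0 hG

lemma stayE_zero (G : Set S) : stayE G 0 = univ := by
  ext ω; simp [stayE]

lemma noHitE_zero (A : Set S) : noHitE A 0 = (retEvent A)ᶜ := by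
  ext ω; simp [noHitE, retEvent]

lemma iInter_stayE (G : Set S) : (⋂ n, stayE G n) = foreverE G := by
  ext ω
  simp only [mem_iInter, stayE, foreverE, mem_setOf_eq]
  exact ⟨fun h m => h (m + 1) m (Nat.lt_succ_self m), fun h n m _ => h m⟩

lemma iInter_tailE_zero (G : Set S) : tailE G 0 = foreverE G := by
  ext ω; simp [tailE, foreverE]

lemma stayE_antitone (G : Set S) : Antitone (stayE G) := by
  intro a b hab ω hω m hm
  exact hω m (lt_of_lt_of_le hm hab)

lemma pre_zeroE_mem {u : S} {G : Set S} (hu : u ∈ G) : consTraj u ⁻¹' zeroE G = univ := by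
  ext ω; simp [zeroE, hu]

lemma pre_zeroE_not_mem {u : S} {G : Set S} (hu : u ∉ G) : consTraj u ⁻¹' zeroE G = ∅ := by
  ext ω; simp [zeroE, hu]

lemma pre_stayE (u : S) (G : Set S) (n : ℕ) :
    consTraj u ⁻¹' stayE G (n + 1) = zeroE G ∩ stayE G n := by
  ext ω
  simp only [mem_preimage, stayE, zeroE, mem_setOf_eq, mem_inter_iff]
  constructor
  · intro h
    refine ⟨h 0 (Nat.succ_pos n), fun m hm => ?_⟩
    have := h (m + 1) (by omega)
    simpa using this
  · rintro ⟨h0, h⟩ m hm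
    match m with
    | 0 => simpa using h0
    | (j + 1) => simpa using h j (by omega)

lemma pre_noHitE (u : S) (A : Set S) (n : ℕ) :
    consTraj u ⁻¹' noHitE A (n + 1) = noHitE A n := by
  ext ω
  simp only [mem_preimage, noHitE, mem_setOf_eq]
  constructor
  · intro h m hm
    have := h (m + 1) (by omega)
    simpa using this
  · intro h m hm
    match m with
    | 0 => omega
    | (j + 1) => simpa using h j (by omega)

lemma pre_tailE (u : S) (G : Set S) (n : ℕ) :
    consTraj u ⁻¹' tailE G (n + 1) = tailE G n := by
  ext ω
  simp only [mem_preimage, tailE, mem_setOf_eq]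
  constructor
  · intro h m hm
    have := h (m + 1) (by omega)
    simpa using this
  · intro h m hm
    match m with
    | 0 => omega
    | (j + 1) => simpa using h j (by omega)

lemma pre_foreverE (u : S) (G : Set S) :
    consTraj u ⁻¹' foreverE G = zeroE G ∩ foreverE G := by
  ext ω
  simp only [mem_preimage, foreverE, zeroE, mem_setOf_eq, mem_inter_iff]
  constructor
  · intro h
    refine ⟨by simpa using h 0, fun m => by simpa using h (m + 1)⟩
  · rintro ⟨h0, h⟩ m
    match m with
    | 0 => simpa using h0
    | (j + 1) => simpa using h j

variable (P : Kernel S S) [IsMarkovKernel P] (T : Kernel S (ℕ → S)) [IsMarkovKernel T]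

lemma traj_step (hT : IsTrajKernel P T) (s : S) {E : Set (ℕ → S)} (hE : MeasurableSet E) :
    T s E = ∫⁻ u, T u (consTraj s ⁻¹' E) ∂(P s) := by
  conv_lhs => rw [hT s]
  rw [Measure.map_apply (measurable_consTraj s) hE,
    Measure.bind_apply (measurable_consTraj s hE) (T.measurable.aemeasurable)]

lemma aux_main (hT : IsTrajKernel P T)
    (A B : Set S) (hA : MeasurableSet A) (hB : MeasurableSet B)
    (I : Set S) (hI : MeasurableSet I)
    (hInv : ∀ s : S, T s ((invEvent I)ᶜ ∪ (finVisits A ∪ infVisits B)) = 1) :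
    ∃ J : Set S, MeasurableSet J ∧ J ⊆ I \ A ∧
      (⨆ s ∈ J, T s (retEvent A)) < 1 ∧
      ∀ s ∈ I, T s (retEvent (B ∪ J ∪ Iᶜ)) = 1 := by
  have hret : MeasurableSet (retEvent A) := measurableSet_retEvent hA
  set J : Set S := (I \ A) ∩ {s | T s (retEvent A) ≤ 2⁻¹} with hJdef
  have hJmeas : MeasurableSet J :=
    (hI.diff hA).inter ((T.measurable_coe hret) measurableSet_Iic)
  have hJsub : J ⊆ I \ A := inter_subset_left
  set G : Set S := (I \ A) \ J with hGdef
  have hGmeas : MeasurableSet G := (hI.diff hA).diff hJmeas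
  have hGr : ∀ u ∈ G, (2 : ℝ≥0∞)⁻¹ < T u (retEvent A) := by
    intro u hu
    by_contra h
    exact hu.2 ⟨hu.1, not_lt.mp h⟩
  have hGA : ∀ u ∈ G, u ∉ A := fun u hu => hu.1.2
  -- zeroE G has trivial measure
  have hzero_not : ∀ u : S, u ∉ G → T u (zeroE G) = 0 := by
    intro u hu
    rw [traj_step P T hT u (measurableSet_zeroE hGmeas)]
    simp [pre_zeroE_not_mem hu]
  have hzero_mem : ∀ u : S, u ∈ G → T u (zeroE G) = 1 := by
    intro u hu
    rw [traj_step P T hT u (measurableSet_zeroE hGmeas)]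
    simp [pre_zeroE_mem hu]
  -- main inductive estimate
  have M : ∀ n : ℕ, ∀ u : S,
      T u (zeroE G ∩ stayE G n ∩ noHitE A n) ≤ 2⁻¹ * T u (zeroE G ∩ stayE G n) := by
    intro n
    induction n with
    | zero =>
      intro u
      rw [stayE_zero, inter_univ, noHitE_zero]
      by_cases hu : u ∈ G
      · have h1 : T u (zeroE G) = 1 := hzero_mem u hu
        calc T u (zeroE G ∩ (retEvent A)ᶜ) ≤ T u ((retEvent A)ᶜ) :=
              measure_mono inter_subset_right
          _ = 1 - T u (retEvent A) := prob_compl_eq_one_sub hret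
          _ ≤ 1 - 2⁻¹ := tsub_le_tsub_left (le_of_lt (hGr u hu)) 1
          _ = 2⁻¹ := ENNReal.one_sub_inv_two
          _ = 2⁻¹ * T u (zeroE G) := by rw [h1, mul_one]
      · have h0 : T u (zeroE G) = 0 := hzero_not u hu
        calc T u (zeroE G ∩ (retEvent A)ᶜ) ≤ T u (zeroE G) :=
              measure_mono inter_subset_left
          _ = 0 := h0
          _ ≤ 2⁻¹ * T u (zeroE G) := zero_le
    | succ n ih =>
      intro u
      have hEmeas : MeasurableSet (zeroE G ∩ stayE G (n + 1) ∩ noHitE A (n + 1)) :=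
        ((measurableSet_zeroE hGmeas).inter (measurableSet_stayE hGmeas _)).inter
          (measurableSet_noHitE hA _)
      have hFmeas : MeasurableSet (zeroE G ∩ stayE G (n + 1)) :=
        (measurableSet_zeroE hGmeas).inter (measurableSet_stayE hGmeas _)
      rw [traj_step P T hT u hEmeas, traj_step P T hT u hFmeas]
      by_cases hu : u ∈ G
      · have hpreE : consTraj u ⁻¹' (zeroE G ∩ stayE G (n + 1) ∩ noHitE A (n + 1)) =
            zeroE G ∩ stayE G n ∩ noHitE A n := by
          rw [preimage_inter, preimage_inter, pre_zeroE_mem hu, pre_stayE, pre_noHitE,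
            univ_inter]
        have hpreF : consTraj u ⁻¹' (zeroE G ∩ stayE G (n + 1)) =
            zeroE G ∩ stayE G n := by
          rw [preimage_inter, pre_zeroE_mem hu, pre_stayE, univ_inter]
        rw [hpreE, hpreF]
        calc ∫⁻ v, T v (zeroE G ∩ stayE G n ∩ noHitE A n) ∂(P u)
            ≤ ∫⁻ v, 2⁻¹ * T v (zeroE G ∩ stayE G n) ∂(P u) := lintegral_mono fun v => ih v
          _ = 2⁻¹ * ∫⁻ v, T v (zeroE G ∩ stayE G n) ∂(P u) := by
              rw [lintegral_const_mul _ (T.measurable_coe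
                ((measurableSet_zeroE hGmeas).inter (measurableSet_stayE hGmeas _)))]
      · have hpreE : consTraj u ⁻¹' (zeroE G ∩ stayE G (n + 1) ∩ noHitE A (n + 1)) = ∅ := by
          rw [preimage_inter, preimage_inter, pre_zeroE_not_mem hu, empty_inter, empty_inter]
        rw [hpreE]
        simp
  -- the forever event is null
  have hforever0 : ∀ u : S, T u (zeroE G ∩ foreverE G) = 0 := by
    intro u
    set x := T u (zeroE G ∩ foreverE G) with hx
    have hxle : ∀ n : ℕ, x ≤ 2⁻¹ * T u (zeroE G ∩ stayE G n) := by
      intro n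
      refine le_trans (measure_mono ?_) (M n u)
      intro ω hω
      exact ⟨⟨hω.1, fun m _ => hω.2 m⟩, fun m _ => fun hmem => hGA _ (hω.2 m) hmem⟩
    have htend : Tendsto (fun n => T u (zeroE G ∩ stayE G n)) atTop (𝓝 x) := by
      have h1 : (⋂ n, zeroE G ∩ stayE G n) = zeroE G ∩ foreverE G := by
        rw [← inter_iInter, iInter_stayE]
      have := tendsto_measure_iInter_atTop (μ := (T u : Measure (ℕ → S)))
        (s := fun n => zeroE G ∩ stayE G n)
        (fun n => ((measurableSet_zeroE hGmeas).inter
          (measurableSet_stayE hGmeas n)).nullMeasurableSet)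
        (fun a b hab => inter_subset_inter_right _ (stayE_antitone G hab))
        ⟨0, measure_ne_top _ _⟩
      rwa [h1] at this
    have htend2 : Tendsto (fun n => 2⁻¹ * T u (zeroE G ∩ stayE G n)) atTop (𝓝 (2⁻¹ * x)) :=
      ENNReal.Tendsto.const_mul htend (Or.inr (by norm_num))
    have hxle2 : x ≤ 2⁻¹ * x := ge_of_tendsto' htend2 hxle
    by_contra hx0
    have hxt : x ≠ ⊤ := measure_ne_top _ _
    have : 2⁻¹ * x < 1 * x := by
      have h21 : (2 : ℝ≥0∞)⁻¹ < 1 := ENNReal.inv_lt_one.mpr one_lt_two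
      have := ENNReal.mul_lt_mul_right hx0 hxt h21
      rwa [mul_comm x, mul_comm x] at this
    rw [one_mul] at this
    exact absurd hxle2 (not_le.mpr this)
  have hforever : ∀ u : S, T u (foreverE G) = 0 := by
    intro u
    rw [traj_step P T hT u (measurableSet_foreverE hGmeas), pre_foreverE]
    simp [hforever0]
  have htail : ∀ n : ℕ, ∀ u : S, T u (tailE G n) = 0 := by
    intro n
    induction n with
    | zero => intro u; rw [iInter_tailE_zero]; exact hforever u
    | succ n ih =>
      intro u
      rw [traj_step P T hT u (measurableSet_tailE hGmeas _), pre_tailE]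
      simp [ih]
  refine ⟨J, hJmeas, hJsub, ?_, ?_⟩
  · refine lt_of_le_of_lt (iSup₂_le fun s hs => hs.2) ?_
    exact ENNReal.inv_lt_one.mpr one_lt_two
  · intro s hs
    have hBJImeas : MeasurableSet (B ∪ J ∪ Iᶜ) := (hB.union hJmeas).union hI.compl
    have hR : MeasurableSet (retEvent (B ∪ J ∪ Iᶜ)) := measurableSet_retEvent hBJImeas
    set X : Set (ℕ → S) := (invEvent I)ᶜ ∪ (finVisits A ∪ infVisits B) with hXdef
    have hXmeas : MeasurableSet X :=
      ((measurableSet_invEvent hI).compl).union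
        ((measurableSet_finVisits hA).union (measurableSet_infVisits hB))
    -- zeroE I complement is null when starting in I
    have hzI : T s ((zeroE I)ᶜ) = 0 := by
      rw [traj_step P T hT s (measurableSet_zeroE hI).compl]
      have : consTraj s ⁻¹' (zeroE I)ᶜ = ∅ := by
        rw [preimage_compl, pre_zeroE_mem hs, compl_univ]
      simp [this]
    have hXc : T s (Xᶜ) = 0 := by
      have h1 := measure_add_measure_compl (μ := (T s : Measure (ℕ → S))) hXmeas
      rw [hInv s, measure_univ] at h1
      have h2 : (1 : ℝ≥0∞) + T s Xᶜ = 1 + 0 := by rw [h1, add_zero]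
      exact (ENNReal.add_right_inj (by norm_num)).mp h2
    have hsub : (retEvent (B ∪ J ∪ Iᶜ))ᶜ ⊆ (zeroE I)ᶜ ∪ Xᶜ ∪ ⋃ n, tailE G n := by
      intro ω hω
      simp only [retEvent, mem_compl_iff, mem_setOf_eq, not_exists] at hω
      by_cases h0 : ω ∈ zeroE I
      swap
      · exact Or.inl (Or.inl h0)
      by_cases hX : ω ∈ X
      swap
      · exact Or.inl (Or.inr hX)
      refine Or.inr ?_
      have hInI : ∀ n, ω (n + 1) ∈ I := by
        intro n
        have := hω n
        by_contra hc
        exact this (Or.inr hc)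
      have hNotB : ∀ n, ω (n + 1) ∉ B := by
        intro n hc
        exact hω n (Or.inl (Or.inl hc))
      have hNotJ : ∀ n, ω (n + 1) ∉ J := by
        intro n hc
        exact hω n (Or.inl (Or.inr hc))
      have hInvI : ω ∈ invEvent I := by
        intro n
        match n with
        | 0 => exact h0
        | (j + 1) => exact hInI j
      have hFI : ω ∈ finVisits A ∪ infVisits B := by
        rcases hX with hX | hX
        · exact absurd hInvI hX
        · exact hX
      rcases hFI with hF | hInfB
      · obtain ⟨N, hN⟩ := hF
        refine mem_iUnion.mpr ⟨N, ?_⟩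
        intro m hm
        refine ⟨⟨hInI m, hN (m + 1) (by omega)⟩, hNotJ m⟩
      · obtain ⟨m, hm1, hm2⟩ := hInfB 1
        match m, hm1 with
        | (j + 1), _ => exact absurd hm2 (hNotB j)
    have hnull : T s ((retEvent (B ∪ J ∪ Iᶜ))ᶜ) = 0 := by
      refine measure_mono_null hsub ?_
      refine measure_union_null (measure_union_null hzI hXc) ?_
      exact measure_iUnion_null fun n => htail n s
    have h1 := measure_add_measure_compl (μ := (T s : Measure (ℕ → S))) hR
    rw [hnull, add_zero, measure_univ] at h1
    exact h1

end Aux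

/-- existence of absorbing regions given a strong invariant.  If `I` is a
measurable region such that from every state the chain almost surely either leaves `I`
or satisfies the reactivity property, then there exist measurable regions
`Jᵢ ⊆ I \ Aᵢ` such that the return probability from `Jᵢ` to `Aᵢ` is bounded away from
one, and from every state of `I` the chain almost surely returns to `Bᵢ ∪ Jᵢ ∪ Iᶜ`. -/
theorem absorbing_regions_exist
    {S : Type*} [MeasurableSpace S]
    (P : Kernel S S) [IsMarkovKernel P]
    (T : Kernel S (ℕ → S)) [IsMarkovKernel T] (hT : IsTrajKernel P T)
    (k : ℕ) (A B : Fin k → Set S)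
    (hA : ∀ i, MeasurableSet (A i)) (hB : ∀ i, MeasurableSet (B i))
    (I : Set S) (hI : MeasurableSet I)
    (hInv : ∀ s : S,
      T s ((invEvent I)ᶜ ∪ ⋂ i, finVisits (A i) ∪ infVisits (B i)) = 1) :
    ∃ J : Fin k → Set S,
      (∀ i, MeasurableSet (J i)) ∧
      (∀ i, J i ⊆ I \ A i) ∧
      (∀ i, (⨆ s ∈ J i, T s (retEvent (A i))) < 1) ∧
      (∀ i, ∀ s ∈ I, T s (retEvent (B i ∪ J i ∪ Iᶜ)) = 1) := by
  have hInv' : ∀ i : Fin k, ∀ s : S,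
      T s ((invEvent I)ᶜ ∪ (finVisits (A i) ∪ infVisits (B i))) = 1 := by
    intro i s
    refine le_antisymm prob_le_one ?_
    calc (1 : ℝ≥0∞) = T s ((invEvent I)ᶜ ∪ ⋂ j, finVisits (A j) ∪ infVisits (B j)) :=
          (hInv s).symm
      _ ≤ T s ((invEvent I)ᶜ ∪ (finVisits (A i) ∪ infVisits (B i))) :=
          measure_mono (union_subset_union_right _ (iInter_subset _ i))
  choose J h1 h2 h3 h4 using fun i =>
    aux_main P T hT (A i) (B i) (hA i) (hB i) I hI (hInv' i)
  exact ⟨J, h1, h2, h3, h4⟩
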